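/- arXiv:1705.08159 — 3 statements merged into one kernel-verified Lean document; each statement's English description precedes it below -/
import Mathlib

section
/- Let (K,v) be a Henselian valued field with value group Γ and residue field k of characteristic not dividing d!. Let φ = π₁φ₁ ⊥ ⋯ ⊥ π_rφ_r be a diagonal form of degree d over K, where each φᵢ is a diagonal unit form over the valuation ring and the values v(πᵢ) are pairwise distinct in Γ/dΓ. Then φ is isotropic over K if and only if some residue form φ̄ᵢ is isotropic over k. -/
def IsotropicDiag (K : Type*) [Field K] (d : ℕ) {ι : Type*} [Fintype ι] (a : ι → K) : Prop :=
  ∃ x : ι → K, x ≠ 0 ∧ ∑ i, a i * x i ^ d = 0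

/-!
If some residue form `φ̄ᵢ` has a nontrivial zero, Hensel's lemma for `X ^ d - c`, applied in a
coordinate where that zero is nonzero (a simple root since `d ≠ 0` in `k`), lifts it to a zero of
`φᵢ`, hence of `φ`. Conversely, if every `φ̄ᵢ` is anisotropic, then a primitive vector `z` over the
valuation ring gives a unit `φᵢ(z)`, so scaling shows `v(φᵢ(x)) = (max_j v(x_j))^d` for `x ≠ 0`.
The nonzero summands `πᵢ φᵢ(xᵢ)` of `φ(x)` then have valuations in pairwise distinct classes
modulo `d`-th powers, so one of them strictly dominates and `φ(x) ≠ 0`.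
-/

section

open IsLocalRing

theorem IsotropicDiag.sigma {K : Type*} [Field K] {d : ℕ} (hd : d ≠ 0) {ι : Type*} [Fintype ι]
    {κ : ι → Type*} [∀ i, Fintype (κ i)] {a : (i : ι) → κ i → K} {i : ι}
    (h : IsotropicDiag K d (a i)) : IsotropicDiag K d (fun p : Σ i, κ i => a p.1 p.2) := by
  classical
  obtain ⟨x, hx, hsum⟩ := h
  let X : (i : ι) → κ i → K := Function.update 0 i x
  refine ⟨fun p => X p.1 p.2, fun h0 => hx (funext fun j => ?_), ?_⟩
  · simpa [X] using congrFun h0 ⟨i, j⟩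
  rw [Fintype.sum_sigma, Finset.sum_eq_single i]
  · simpa [X] using hsum
  · intro i' _ hi'
    simp [X, Function.update_of_ne hi', hd]
  · simp

theorem isotropicDiag_mul_algebraMap_of_sum_eq_zero {R K : Type*} [CommRing R] [Field K]
    [Algebra R K] (hinj : Function.Injective (algebraMap R K)) {d : ℕ} {ι : Type*} [Fintype ι]
    {a x : ι → R} (hx : x ≠ 0) (h : ∑ j, a j * x j ^ d = 0) (c : K) :
    IsotropicDiag K d (fun j => c * algebraMap R K (a j)) := by
  refine ⟨fun j => algebraMap R K (x j), fun h0 => hx (funext fun j => hinj ?_), ?_⟩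
  · simpa using congrFun h0 j
  · simp only [mul_assoc, ← Finset.mul_sum, ← map_pow, ← map_mul, ← map_sum, h, map_zero,
      mul_zero]

open Polynomial in
theorem HenselianLocalRing.exists_pow_eq_of_residue {R : Type*} [CommRing R]
    [HenselianLocalRing R] {d : ℕ} (hd : (d : ResidueField R) ≠ 0) (c : R)
    {t₀ : ResidueField R} (ht₀ : t₀ ≠ 0) (h : t₀ ^ d = residue R c) :
    ∃ t : R, t ^ d = c ∧ residue R t = t₀ := by
  have hd₀ : d ≠ 0 := by rintro rfl; exact hd Nat.cast_zero
  have hensel := ((HenselianLocalRing.TFAE R).out 0 1).mp ‹_›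
  obtain ⟨t, ht, rfl⟩ := hensel (X ^ d - C c)
    (monic_X_pow_sub_C c hd₀) t₀ (by simp [h])
    (by simpa [derivative_X_pow] using ⟨hd, fun h => absurd h ht₀⟩)
  exact ⟨t, by simpa [sub_eq_zero] using ht, rfl⟩

theorem IsotropicDiag.exists_primitive_lift {R : Type*} [CommRing R] [HenselianLocalRing R]
    {d : ℕ} (hd : (d : ResidueField R) ≠ 0) {ι : Type*} [Fintype ι] {a : ι → R}
    (ha : ∀ j, IsUnit (a j)) (h : IsotropicDiag (ResidueField R) d (fun j => residue R (a j))) :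
    ∃ x : ι → R, (∃ j, IsUnit (x j)) ∧ ∑ j, a j * x j ^ d = 0 := by
  classical
  obtain ⟨x₀, hx₀, hsum⟩ := h
  obtain ⟨j, hj⟩ := Function.ne_iff.mp hx₀
  choose y hy using fun j => residue_surjective (R := R) (x₀ j)
  set rest := ∑ i ∈ {j}ᶜ, a i * y i ^ d
  obtain ⟨t, ht, htj⟩ := HenselianLocalRing.exists_pow_eq_of_residue hd
    (-(ha j).unit⁻¹ * rest) hj <| by
      rw [Fintype.sum_eq_add_sum_compl j] at hsum
      have hrest : residue R rest = ∑ i ∈ {j}ᶜ, residue R (a i) * x₀ i ^ d := by simp [rest, hy]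
      rw [map_mul, map_neg, map_units_inv, IsUnit.unit_spec, hrest]
      have haj : residue R (a j) ≠ 0 := (residue_ne_zero_iff_isUnit _).mpr (ha j)
      field_simp
      linear_combination hsum
  refine ⟨Function.update y j t, ⟨j, ?_⟩, ?_⟩
  · rw [Function.update_self, ← residue_ne_zero_iff_isUnit, htj]; exact hj
  · rw [Fintype.sum_eq_add_sum_compl j, Function.update_self, ht]
    have hrest : ∑ i ∈ {j}ᶜ, a i * Function.update y j t i ^ d = rest :=
      Finset.sum_congr rfl fun i hi => by
        rw [Function.update_of_ne (by simpa using hi)]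
    rw [hrest]
    linear_combination (-rest) * (ha j).mul_val_inv

theorem Valuation.exists_forall_le_of_ne_zero {K Γ₀ : Type*} [DivisionRing K]
    [LinearOrderedCommGroupWithZero Γ₀] (v : Valuation K Γ₀) {ι : Type*} [Finite ι]
    {x : ι → K} (hx : x ≠ 0) : ∃ m, x m ≠ 0 ∧ ∀ j, v (x j) ≤ v (x m) := by
  have := Fintype.ofFinite ι
  obtain ⟨j, hj⟩ := Function.ne_iff.mp hx
  obtain ⟨m, -, hm⟩ := Finset.univ.exists_max_image (fun j => v (x j)) ⟨j, Finset.mem_univ _⟩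
  refine ⟨m, fun hm0 => hj (v.zero_iff.mp ?_), fun i => hm i (Finset.mem_univ _)⟩
  simpa [hm0] using hm j (Finset.mem_univ _)

theorem Valuation.sum_ne_zero_of_injOn {K Γ₀ : Type*} [DivisionRing K]
    [LinearOrderedCommGroupWithZero Γ₀] (v : Valuation K Γ₀) {ι : Type*} [Fintype ι]
    {f : ι → K} (hf : f ≠ 0) (hinj : Set.InjOn (fun i => v (f i)) {i | f i ≠ 0}) :
    ∑ i, f i ≠ 0 := by
  classical
  obtain ⟨m, hfm, hm⟩ := v.exists_forall_le_of_ne_zero hf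
  rw [← v.ne_zero_iff, v.map_sum_eq_of_lt (Finset.mem_univ m), v.ne_zero_iff]
  · exact hfm
  intro i hi
  refine (hm i).lt_of_ne fun heq => ?_
  by_cases hfi : f i = 0
  · exact hfm (v.zero_iff.mp (by rw [← heq, hfi, map_zero]))
  · exact (by simpa using hi : i ≠ m) (hinj hfi hfm heq)

theorem isUnit_sum_of_not_isotropicDiag_residue {R : Type*} [CommRing R] [IsLocalRing R] {d : ℕ}
    {ι : Type*} [Fintype ι] {a : ι → R}
    (h : ¬ IsotropicDiag (ResidueField R) d (fun j => residue R (a j)))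
    {z : ι → R} (hz : ∃ j, IsUnit (z j)) : IsUnit (∑ j, a j * z j ^ d) := by
  obtain ⟨j, hj⟩ := hz
  rw [← residue_ne_zero_iff_isUnit]
  refine fun h0 => h ⟨fun j => residue R (z j),
    Function.ne_iff.mpr ⟨j, (residue_ne_zero_iff_isUnit _).mpr hj⟩, ?_⟩
  simpa using h0

section ValuationRing

variable {R : Type*} [CommRing R] [IsDomain R] [ValuationRing R]
  {K : Type*} [Field K] [Algebra R K] [IsFractionRing R K]

theorem ValuationRing.integers : (ValuationRing.valuation R K).Integers R where
  hom_inj := IsFractionRing.injective R K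
  map_le_one r := (ValuationRing.mem_integer_iff R K _).mpr ⟨r, rfl⟩
  exists_of_le_one _ hr := (ValuationRing.mem_integer_iff R K _).mp hr

theorem exists_valuation_sum_eq_pow_of_not_isotropicDiag_residue {d : ℕ} {ι : Type*} [Fintype ι]
    {a : ι → R} (h : ¬ IsotropicDiag (ResidueField R) d (fun j => residue R (a j)))
    {x : ι → K} (hx : x ≠ 0) :
    ∃ γ ≠ 0, ValuationRing.valuation R K (∑ j, algebraMap R K (a j) * x j ^ d) = γ ^ d := by
  set v := ValuationRing.valuation R K
  have hv : v.Integers R := ValuationRing.integers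
  obtain ⟨m, hxm, hm⟩ := v.exists_forall_le_of_ne_zero hx
  choose z hz using fun j => hv.exists_of_le_one (r := x j / x m) <| by
    rw [map_div₀]; exact div_le_one_of_le₀ (hm j) zero_le
  have hzm : z m = 1 := hv.hom_inj <| by rw [hz, div_self hxm, map_one]
  have hs := isUnit_sum_of_not_isotropicDiag_residue h ⟨m, hzm ▸ isUnit_one⟩
  have hsum : ∑ j, algebraMap R K (a j) * x j ^ d =
      algebraMap R K (∑ j, a j * z j ^ d) * x m ^ d := by
    simp only [map_sum, map_mul, map_pow, hz, Finset.sum_mul, div_pow, mul_assoc,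
      div_mul_cancel₀ _ (pow_ne_zero d hxm)]
  refine ⟨v (x m), v.ne_zero_iff.mpr hxm, ?_⟩
  rw [hsum, map_mul, hv.one_of_isUnit hs, one_mul, map_pow]

theorem not_isotropicDiag_sigma_of_not_isotropicDiag_residue {d : ℕ} (hd : d ≠ 0)
    {ι : Type*} [Fintype ι] {κ : ι → Type*} [∀ i, Fintype (κ i)] {a : (i : ι) → κ i → R}
    (hres : ∀ i, ¬ IsotropicDiag (ResidueField R) d (fun j => residue R (a i j)))
    {π : ι → K} (hπ : ∀ i, π i ≠ 0)
    (hdist : ∀ i j, i ≠ j → ∀ γ, ValuationRing.valuation R K (π i) ≠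
      ValuationRing.valuation R K (π j) * γ ^ d) :
    ¬ IsotropicDiag K d (fun p : Σ i, κ i => π p.1 * algebraMap R K (a p.1 p.2)) := by
  rintro ⟨x, hx, hsum⟩
  set v := ValuationRing.valuation R K
  set b : ι → K := fun i => π i * ∑ j, algebraMap R K (a i j) * x ⟨i, j⟩ ^ d
  have hval : ∀ i, (fun j => x ⟨i, j⟩) ≠ 0 → ∃ γ ≠ 0, v (b i) = v (π i) * γ ^ d := by
    intro i hxi
    obtain ⟨γ, hγ, hv⟩ := exists_valuation_sum_eq_pow_of_not_isotropicDiag_residue (hres i) hxi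
    exact ⟨γ, hγ, by rw [map_mul, hv]⟩
  have hb_ne_zero : ∀ i, b i ≠ 0 ↔ (fun j => x ⟨i, j⟩) ≠ 0 := by
    refine fun i => ⟨fun hbi hxi => hbi ?_, fun hxi => ?_⟩
    · simp [b, funext_iff.mp hxi, hd]
    · obtain ⟨γ, hγ, hvb⟩ := hval i hxi
      rw [← v.ne_zero_iff, hvb]
      exact mul_ne_zero (v.ne_zero_iff.mpr (hπ i)) (pow_ne_zero d hγ)
  refine v.sum_ne_zero_of_injOn (f := b) ?_ ?_ ?_
  · obtain ⟨⟨i, j⟩, hij⟩ := Function.ne_iff.mp hx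
    exact Function.ne_iff.mpr ⟨i, (hb_ne_zero i).mpr (Function.ne_iff.mpr ⟨j, hij⟩)⟩
  · intro i hi j hj hij
    by_contra hne
    obtain ⟨γ, hγ, hvi⟩ := hval i ((hb_ne_zero i).mp hi)
    obtain ⟨δ, -, hvj⟩ := hval j ((hb_ne_zero j).mp hj)
    refine hdist i j hne (δ / γ) ?_
    rw [div_pow, ← mul_div_assoc, eq_div_iff (pow_ne_zero d hγ), ← hvi, ← hvj]
    exact hij
  · rw [← hsum, Fintype.sum_sigma]
    simp only [b, Finset.mul_sum, mul_assoc]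

end ValuationRing

end

/-- **Let `(K,v)` be a Henselian valued field** (given by its valuation ring `R`, Henselian,
with `K = Frac R`, valuation `v = ValuationRing.valuation R K` and value group `Γ`)
**with residue field `k` of characteristic not dividing `d!`.  Let
`φ = π₁φ₁ ⊥ ⋯ ⊥ π_rφ_r` be a diagonal form of degree `d` over `K`, where each `φᵢ` is a
diagonal unit form over `R` and the values `v(πᵢ)` are pairwise distinct in `Γ/dΓ`.
Then `φ` is isotropic over `K` iff some residue form `φ̄ᵢ` is isotropic over `k`.** -/
theorem diag_form_isotropic_iff_some_residue
    (R : Type*) [CommRing R] [IsDomain R] [ValuationRing R] [HenselianLocalRing R]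
    (d : ℕ) (hd : 1 ≤ d) (hchar : (d.factorial : IsLocalRing.ResidueField R) ≠ 0)
    (r : ℕ) (n : Fin r → ℕ) (π : Fin r → FractionRing R) (hπ : ∀ i, π i ≠ 0)
    (a : (i : Fin r) → Fin (n i) → R) (ha : ∀ i j, IsUnit (a i j))
    (hdist : ∀ i j : Fin r, i ≠ j → ∀ γ : ValuationRing.ValueGroup R (FractionRing R),
      ValuationRing.valuation R (FractionRing R) (π i) ≠
        ValuationRing.valuation R (FractionRing R) (π j) * γ ^ d) :
    IsotropicDiag (FractionRing R) d
        (fun p : Σ i : Fin r, Fin (n i) =>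
          π p.1 * algebraMap R (FractionRing R) (a p.1 p.2)) ↔
      ∃ i : Fin r, IsotropicDiag (IsLocalRing.ResidueField R) d
        (fun j => IsLocalRing.residue R (a i j)) := by
  have hd₀ : d ≠ 0 := Nat.one_le_iff_ne_zero.mp hd
  have hd_residue : (d : IsLocalRing.ResidueField R) ≠ 0 := by
    obtain ⟨m, hm⟩ := Nat.dvd_factorial hd le_rfl
    exact left_ne_zero_of_mul (by rwa [hm, Nat.cast_mul] at hchar)
  constructor
  · intro hiso
    by_contra! hres
    exact not_isotropicDiag_sigma_of_not_isotropicDiag_residue hd₀ hres hπ hdist hiso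
  · rintro ⟨i, hi⟩
    obtain ⟨x, ⟨j, hj⟩, hx⟩ := hi.exists_primitive_lift hd_residue (ha i)
    have hx₀ : x ≠ 0 := fun h0 => hj.ne_zero (congrFun h0 j)
    exact IsotropicDiag.sigma (a := fun i j => π i * algebraMap R _ (a i j)) hd₀
      (isotropicDiag_mul_algebraMap_of_sum_eq_zero (IsFractionRing.injective R _) hx₀ hx (π i))
end

section
/- Let A be a discrete valuation ring with fraction field K and residue field k of characteristic not dividing d!. Then u_diag(d,K) ≥ d · u_diag(d,k). -/
noncomputable def uDiag (d : ℕ) (K : Type*) [Field K] : ℕ∞ :=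
  ⨆ (n : ℕ) (_ : ∃ a : Fin n → K, (∀ i, a i ≠ 0) ∧ ¬ IsotropicDiag K d a), (n : ℕ∞)

open IsLocalRing

lemma IsotropicDiag.of_comp_equiv {K : Type*} [Field K] {d : ℕ} {ι ι' : Type*}
    [Fintype ι] [Fintype ι'] (e : ι ≃ ι') {a : ι' → K} (h : IsotropicDiag K d (a ∘ e)) :
    IsotropicDiag K d a := by
  obtain ⟨x, hx0, hx⟩ := h
  refine ⟨x ∘ e.symm, fun h0 => hx0 ?_, ?_⟩
  · ext i
    simpa using congrFun h0 (e i)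
  · rw [← e.sum_comp]
    simpa using hx

lemma IsotropicDiag.exists_integral {A K : Type*} [CommRing A] [Nontrivial A] [Field K] [Algebra A K]
    [IsFractionRing A K] {d : ℕ} {ι : Type*} [Fintype ι] {c : ι → A}
    (h : IsotropicDiag K d (algebraMap A K ∘ c)) :
    ∃ x : ι → A, x ≠ 0 ∧ ∑ i, c i * x i ^ d = 0 := by
  obtain ⟨x, hx0, hx⟩ := h
  obtain ⟨s, hs⟩ := IsLocalization.exist_integer_multiples_of_finite (nonZeroDivisors A) x
  choose y hy using hs
  have hs0 : algebraMap A K s ≠ 0 := IsFractionRing.to_map_ne_zero_of_mem_nonZeroDivisors s.2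
  have hyx : ∀ i, algebraMap A K (y i) = algebraMap A K s * x i := by
    simpa only [Algebra.smul_def] using hy
  refine ⟨y, fun hy0 => hx0 (funext fun i => ?_), IsFractionRing.injective A K ?_⟩
  · simpa [hy0, hs0] using (hyx i).symm
  · calc algebraMap A K (∑ i, c i * y i ^ d)
        = algebraMap A K s ^ d * ∑ i, (algebraMap A K ∘ c) i * x i ^ d := by
          simp only [map_sum, map_mul, map_pow, hyx, Finset.mul_sum, Function.comp_apply]
          exact Finset.sum_congr rfl fun i _ => by ring
      _ = algebraMap A K 0 := by rw [hx, mul_zero, map_zero]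

lemma forall_mem_maximalIdeal_of_sum_mem {A : Type*} [CommRing A] [IsLocalRing A] {d : ℕ}
    {ι : Type*} [Fintype ι] {c : ι → A} (hc : ¬IsotropicDiag (ResidueField A) d (residue A ∘ c))
    {y : ι → A} (hy : ∑ i, c i * y i ^ d ∈ maximalIdeal A) (i : ι) : y i ∈ maximalIdeal A := by
  by_contra hyi
  refine hc ⟨residue A ∘ y, fun h0 => hyi ?_, ?_⟩
  · rw [← residue_eq_zero_iff]
    exact congrFun h0 i
  · simpa using (residue_eq_zero_iff _).mpr hy

section Layers

variable {A : Type*} [CommRing A] [IsDomain A] {d : ℕ} {ι : Type*} [Fintype ι] {π : A}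
  {c : ι → A}

lemma dvd_of_pow_dvd_sum_layers (hπ : π ≠ 0)
    (hc : ∀ y : ι → A, π ∣ ∑ i, c i * y i ^ d → ∀ i, π ∣ y i) :
    ∀ {L : ℕ}, L ≤ d → ∀ x : Fin L → ι → A,
      π ^ L ∣ ∑ j : Fin L, π ^ (j : ℕ) * ∑ i, c i * x j i ^ d → ∀ j i, π ∣ x j i := by
  intro L
  induction L with
  | zero => exact fun _ _ _ j => j.elim0
  | succ L ih =>
    intro hL x hx
    simp only [Fin.sum_univ_castSucc, Fin.val_castSucc, Fin.val_last] at hx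
    set lower := ∑ j : Fin L, π ^ (j : ℕ) * ∑ i, c i * x (Fin.castSucc j) i ^ d
    set top := ∑ i, c i * x (Fin.last L) i ^ d
    have hlower : ∀ j i, π ∣ x (Fin.castSucc j) i := by
      refine ih (by omega) _ ((dvd_add_left (dvd_mul_right (π ^ L) top)).mp ?_)
      exact (pow_dvd_pow π L.le_succ).trans hx
    have hlower_dvd : π ^ (L + 1) ∣ lower := by
      refine Finset.dvd_sum fun j _ => Dvd.dvd.mul_left (Finset.dvd_sum fun i _ => ?_) _
      exact ((pow_dvd_pow π hL).trans (pow_dvd_pow_of_dvd (hlower j i) d)).mul_left _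
    have hlast : π ∣ top := by
      rw [← mul_dvd_mul_iff_left (pow_ne_zero L hπ), ← pow_succ]
      exact (dvd_add_right hlower_dvd).mp hx
    intro j
    induction j using Fin.lastCases with
    | last => exact hc _ hlast
    | cast j => exact hlower j

lemma eq_zero_of_sum_layers_eq_zero [WfDvdMonoid A] (hπ : π ≠ 0) (hπu : ¬IsUnit π)
    (hc : ∀ y : ι → A, π ∣ ∑ i, c i * y i ^ d → ∀ i, π ∣ y i) (x : Fin d → ι → A)
    (hx : ∑ j : Fin d, π ^ (j : ℕ) * ∑ i, c i * x j i ^ d = 0) : x = 0 := by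
  suffices h : ∀ m (x : Fin d → ι → A),
      ∑ j : Fin d, π ^ (j : ℕ) * ∑ i, c i * x j i ^ d = 0 → ∀ j i, π ^ m ∣ x j i by
    funext j i
    by_contra hne
    obtain ⟨m, hm⟩ := FiniteMultiplicity.of_not_isUnit hπu hne
    exact hm (h _ x hx j i)
  intro m
  induction m with
  | zero => simp
  | succ m ih =>
    intro x hx
    choose y hy using dvd_of_pow_dvd_sum_layers hπ hc le_rfl x (hx ▸ dvd_zero _)
    have hy0 : ∑ j : Fin d, π ^ (j : ℕ) * ∑ i, c i * y j i ^ d = 0 := by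
      refine (mul_eq_zero.mp ?_).resolve_left (pow_ne_zero d hπ)
      rw [← hx, Finset.mul_sum]
      simp only [hy, mul_pow, Finset.mul_sum]
      exact Finset.sum_congr rfl fun j _ => Finset.sum_congr rfl fun i _ => by ring
    intro j i
    rw [hy, pow_succ']
    exact mul_dvd_mul_left π (ih y hy0 j i)

end Layers

section DVR

variable {A K : Type*} [CommRing A] [IsDomain A] [IsDiscreteValuationRing A] [Field K]
  [Algebra A K] [IsFractionRing A K] {d : ℕ}

theorem not_isotropicDiag_layers {ι : Type*} [Fintype ι] {π : A} (hπ : Irreducible π)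
    {c : ι → A} (hc : ¬IsotropicDiag (ResidueField A) d (residue A ∘ c)) :
    ¬IsotropicDiag K d fun p : Fin d × ι => algebraMap A K (π ^ (p.1 : ℕ) * c p.2) := by
  intro h
  obtain ⟨x, hx0, hx⟩ := h.exists_integral
  have hcπ : ∀ y : ι → A, π ∣ ∑ i, c i * y i ^ d → ∀ i, π ∣ y i := by
    simpa only [hπ.maximalIdeal_eq, Ideal.mem_span_singleton] using
      fun y => forall_mem_maximalIdeal_of_sum_mem hc (y := y)
  have hlayers := eq_zero_of_sum_layers_eq_zero hπ.ne_zero hπ.not_isUnit hcπ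
    (fun j i => x (j, i)) (by simpa only [Fintype.sum_prod_type, Finset.mul_sum, mul_assoc] using hx)
  exact hx0 (funext fun p => congrFun (congrFun hlayers p.1) p.2)

theorem exists_anisotropic_of_residueField {n : ℕ} (a : Fin n → ResidueField A)
    (ha : ∀ i, a i ≠ 0) (haniso : ¬IsotropicDiag (ResidueField A) d a) :
    ∃ b : Fin (d * n) → K, (∀ i, b i ≠ 0) ∧ ¬IsotropicDiag K d b := by
  obtain ⟨π, hπ⟩ := IsDiscreteValuationRing.exists_irreducible A
  obtain ⟨c, rfl⟩ := (residue_surjective (R := A)).comp_left a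
  refine ⟨(fun p : Fin d × Fin n => algebraMap A K (π ^ (p.1 : ℕ) * c p.2)) ∘
    finProdFinEquiv.symm, fun p => ?_, fun h => not_isotropicDiag_layers hπ haniso
    (h.of_comp_equiv finProdFinEquiv.symm)⟩
  refine (map_ne_zero_iff _ (IsFractionRing.injective A K)).mpr
    (mul_ne_zero (pow_ne_zero _ hπ.ne_zero) fun h => ha (finProdFinEquiv.symm p).2 ?_)
  simp only [Function.comp_apply, h, map_zero]

end DVR

lemma natCast_mul_biSup_le_biSup {P Q : ℕ → Prop} (d : ℕ) (h : ∀ n, P n → Q (d * n)) :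
    (d : ℕ∞) * ⨆ (n) (_ : P n), (n : ℕ∞) ≤ ⨆ (n) (_ : Q n), (n : ℕ∞) := by
  simp_rw [ENat.mul_iSup]
  exact iSup₂_le fun n hn => le_iSup₂_of_le (d * n) (h n hn) (by push_cast; rfl)

theorem uDiag_fractionField_ge_general
    (A : Type*) [CommRing A] [IsDomain A] [IsDiscreteValuationRing A]
    (d : ℕ) :
    (d : ℕ∞) * uDiag d (IsLocalRing.ResidueField A) ≤ uDiag d (FractionRing A) :=
  natCast_mul_biSup_le_biSup d fun _ ⟨a, ha, haniso⟩ =>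
    exists_anisotropic_of_residueField a ha haniso

/-- **Let `A` be a discrete valuation ring with fraction field `K` and residue field `k` of
characteristic not dividing `d!`.  Then `u_diag(d,K) ≥ d · u_diag(d,k)` (in `ℕ∞`, so the
inequality also holds when the values are infinite).** -/
theorem uDiag_fractionField_ge
    (A : Type*) [CommRing A] [IsDomain A] [IsDiscreteValuationRing A]
    (d : ℕ) (hd : 1 ≤ d) (hchar : (d.factorial : IsLocalRing.ResidueField A) ≠ 0) :
    (d : ℕ∞) * uDiag d (IsLocalRing.ResidueField A) ≤ uDiag d (FractionRing A) :=
  uDiag_fractionField_ge_general A d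
end

section
/- Let K be a p-adic field with residue field 𝔽_q, where p does not divide d!. Then u_diag(d,K) = d · u_diag(d,𝔽_q); in particular u_diag(d,K) ≤ d². -/
/-!
By Chevalley–Warning, an anisotropic diagonal form of degree `d` over `𝔽_q` has at most `d`
variables, so `u_diag(d, 𝔽_q) = m` is attained by some `∑ bᵢ xᵢ^d` with unit lifts `bᵢ ∈ A`.

Lower bound: `∑_{j<d} ϖ^j ∑_i bᵢ x_{j,i}^d` is anisotropic over `K`. In an integral solution
whose rows before `j` lie in `(ϖ)`, every row other than `j` contributes a multiple of
`ϖ^(j+1)`, so anisotropy mod `ϖ` puts row `j` in `(ϖ)` as well; dividing by `ϖ` gives a new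
solution, hence the solution is divisible by every power of `ϖ`.

Upper bound: rescaling variables by `d`-th powers puts each coefficient in the form `u ϖ^j` with
`u` a unit and `j < d`. Among more than `d m` coefficients some `m + 1` share the same `j`; the
residue form on those is isotropic, and as `d ≠ 0` in `𝔽_q` Hensel's lemma lifts a nontrivial
zero.
-/

open IsLocalRing Polynomial

section Field

variable {K : Type*} [Field K] {d : ℕ}

def anisotropicDims (d : ℕ) (K : Type*) [Field K] : Set ℕ :=
  {n | ∃ a : Fin n → K, (∀ i, a i ≠ 0) ∧ ¬ IsotropicDiag K d a}

lemma zero_mem_anisotropicDims : 0 ∈ anisotropicDims d K :=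
  ⟨finZeroElim, finZeroElim, fun ⟨_, hx, _⟩ => hx (Subsingleton.elim _ _)⟩

lemma uDiag_eq_of_isGreatest {m : ℕ} (h : IsGreatest (anisotropicDims d K) m) :
    uDiag d K = m :=
  le_antisymm (iSup₂_le fun _ hn => Nat.cast_le.mpr (h.2 hn)) (le_iSup₂_of_le m h.1 le_rfl)

namespace IsotropicDiag

variable {ι ι' : Type*} [Fintype ι] [Fintype ι'] {a : ι → K}

lemma of_mul_pow {c : ι → K} (hc : ∀ i, c i ≠ 0)
    (h : IsotropicDiag K d fun i => a i * c i ^ d) : IsotropicDiag K d a := by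
  obtain ⟨x, hx, hs⟩ := h
  refine ⟨c * x, fun h0 => hx (funext fun i => ?_), ?_⟩
  · simpa [hc i] using congrFun h0 i
  · simpa [mul_pow, mul_assoc] using hs

lemma const_mul (c : K) (h : IsotropicDiag K d a) : IsotropicDiag K d fun i => c * a i := by
  obtain ⟨x, hx, hs⟩ := h
  exact ⟨x, hx, by simp_rw [mul_assoc, ← Finset.mul_sum, hs, mul_zero]⟩

lemma of_comp (hd : d ≠ 0) {e : ι' → ι} (he : e.Injective) (h : IsotropicDiag K d (a ∘ e)) :
    IsotropicDiag K d a := by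
  obtain ⟨x, hx, hs⟩ := h
  refine ⟨Function.extend e x 0, fun h0 => hx (funext fun i => ?_), ?_⟩
  · simpa [he.extend_apply] using congrFun h0 (e i)
  · rw [← hs]
    refine (Fintype.sum_of_injective e he _ _ (fun i hi => ?_) fun i => ?_).symm
    · simp [Function.extend_apply' _ _ _ fun h => hi (Set.mem_range.mpr h), hd]
    · simp [he.extend_apply]

lemma of_lt_card (hd : d ≠ 0) {m : ℕ} (hm : ∀ n ∈ anisotropicDims d K, n ≤ m)
    (ha : ∀ i, a i ≠ 0) (hι : m < Fintype.card ι) : IsotropicDiag K d a := by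
  obtain ⟨e⟩ := Function.Embedding.nonempty_of_card_le (α := Fin (m + 1)) (by simpa using hι)
  refine of_comp hd e.injective (by_contra fun hani => ?_)
  exact (hm (m + 1) ⟨a ∘ e, fun i => ha (e i), hani⟩).not_gt (Nat.lt_succ_self m)

end IsotropicDiag

lemma FiniteField.isotropicDiag_of_lt_card {F ι : Type*} [Field F] [Fintype F] [Fintype ι] (hd : d ≠ 0)
    (hι : d < Fintype.card ι) (a : ι → F) : IsotropicDiag F d a := by
  classical
  set f : MvPolynomial ι F := ∑ i, MvPolynomial.C (a i) * MvPolynomial.X i ^ d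
  have hf : ∀ x, MvPolynomial.eval x f = ∑ i, a i * x i ^ d := by simp [f]
  have hdeg : f.totalDegree < Fintype.card ι := by
    refine lt_of_le_of_lt ((MvPolynomial.totalDegree_finsetSum _ _).trans
      (Finset.sup_le fun i _ => ?_)) hι
    exact (MvPolynomial.totalDegree_mul _ _).trans (by simp [MvPolynomial.totalDegree_X_pow])
  have : Fact (ringChar F).Prime := ⟨CharP.char_is_prime F _⟩
  let zero : {x : ι → F // MvPolynomial.eval x f = 0} := ⟨0, by rw [hf]; simp [hd]⟩
  have hcard : 1 < Fintype.card {x : ι → F // MvPolynomial.eval x f = 0} :=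
    this.out.one_lt.trans_le <|
      Nat.le_of_dvd (Fintype.card_pos_iff.mpr ⟨zero⟩) (char_dvd_card_solutions (ringChar F) hdeg)
  obtain ⟨x, hx⟩ := Fintype.exists_ne_of_one_lt_card hcard zero
  exact ⟨x, fun h => hx (Subtype.ext h), hf x ▸ x.2⟩

end Field

section LocalRing

variable {A : Type*} [CommRing A] [IsLocalRing A] {d : ℕ} {ι : Type*} [Fintype ι]

lemma mem_maximalIdeal_of_sum_mem {b : ι → A}
    (hb : ¬ IsotropicDiag (ResidueField A) d (residue A ∘ b)) {y : ι → A}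
    (h : ∑ i, b i * y i ^ d ∈ maximalIdeal A) (i : ι) : y i ∈ maximalIdeal A := by
  rw [← residue_eq_zero_iff] at h ⊢
  by_contra hy
  exact hb ⟨residue A ∘ y, fun h0 => hy (congrFun h0 i), by simpa using h⟩

variable [HenselianRing A (maximalIdeal A)]

lemma exists_pow_eq_of_residue_eq_pow (hd : (d : ResidueField A) ≠ 0) {c : A}
    {ξ : ResidueField A} (hξ : ξ ≠ 0) (hc : residue A c = ξ ^ d) :
    ∃ t, t ^ d = c ∧ residue A t = ξ := by
  have hd0 : d ≠ 0 := by rintro rfl; exact hd Nat.cast_zero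
  obtain ⟨t₀, rfl⟩ := residue_surjective ξ
  have hder : residue A ((X ^ d - C c).derivative.eval t₀) ≠ 0 := by
    simp only [derivative_sub, derivative_X_pow, derivative_C, sub_zero, eval_mul, eval_natCast,
      eval_pow, eval_X, map_mul, map_natCast, map_pow]
    exact mul_ne_zero hd (pow_ne_zero _ hξ)
  obtain ⟨t, ht, htt₀⟩ := HenselianRing.is_henselian (X ^ d - C c) (monic_X_pow_sub_C c hd0) t₀
    (by rw [← residue_eq_zero_iff]; simp [hc]) (isUnit_iff_ne_zero.mpr hder)
  refine ⟨t, by simpa [sub_eq_zero] using ht, ?_⟩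
  rwa [← sub_eq_zero, ← map_sub, residue_eq_zero_iff]

lemma exists_sum_eq_zero_of_isotropicDiag_residue (hd : (d : ResidueField A) ≠ 0) {u : ι → A}
    (hu : ∀ i, IsUnit (u i)) (h : IsotropicDiag (ResidueField A) d (residue A ∘ u)) :
    ∃ y : ι → A, y ≠ 0 ∧ ∑ i, u i * y i ^ d = 0 := by
  classical
  obtain ⟨ξ, hξ, hsum⟩ := h
  obtain ⟨i₀, hi₀⟩ := Function.ne_iff.mp hξ
  choose y hy using fun i => residue_surjective (ξ i)
  set S := ∑ i ∈ Finset.univ.erase i₀, u i * y i ^ d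
  set v := (hu i₀).unit
  have hresS : residue A (u i₀) * ξ i₀ ^ d + residue A S = 0 := by
    rw [← hsum, ← Finset.add_sum_erase _ _ (Finset.mem_univ i₀)]
    simp [S, hy]
  have hv : residue A (↑v⁻¹ : A) * residue A (u i₀) = 1 := by
    rw [← map_mul, ← (hu i₀).unit_spec, Units.inv_mul, map_one]
  obtain ⟨t, ht, htξ⟩ := exists_pow_eq_of_residue_eq_pow hd hi₀ (c := -(↑v⁻¹ * S))
    (by rw [map_neg, map_mul]; linear_combination ξ i₀ ^ d * hv - residue A ↑v⁻¹ * hresS)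
  refine ⟨Function.update y i₀ t, fun h0 => hi₀ ?_, ?_⟩
  · simpa [htξ] using congrArg (residue A) (congrFun h0 i₀)
  · rw [← Finset.add_sum_erase _ _ (Finset.mem_univ i₀), Function.update_self, ht]
    rw [Finset.sum_congr rfl fun i hi => by rw [Function.update_of_ne (Finset.ne_of_mem_erase hi)]]
    have : u i₀ * ↑v⁻¹ = 1 := by rw [← (hu i₀).unit_spec, Units.mul_inv]
    linear_combination (-S) * this

end LocalRing

section FractionRing

variable {A K : Type*} [CommRing A] [IsDomain A] [Field K] [Algebra A K] [IsFractionRing A K]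
  {d : ℕ} {ι : Type*} [Fintype ι]

lemma isotropicDiag_algebraMap_iff {b : ι → A} :
    IsotropicDiag K d (algebraMap A K ∘ b) ↔ ∃ y : ι → A, y ≠ 0 ∧ ∑ i, b i * y i ^ d = 0 := by
  have hinj := IsFractionRing.injective A K
  constructor
  · rintro ⟨x, hx, hsum⟩
    obtain ⟨s, hs⟩ := IsLocalization.exist_integer_multiples_of_finite (nonZeroDivisors A) x
    choose y hy using hs
    have hs0 : algebraMap A K s ≠ 0 := IsFractionRing.to_map_ne_zero_of_mem_nonZeroDivisors s.2
    refine ⟨y, fun h0 => hx (funext fun i => ?_), hinj ?_⟩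
    · simpa [h0, Algebra.smul_def, hs0] using hy i
    · simp_rw [map_sum, map_mul, map_pow, hy, Algebra.smul_def, mul_pow, mul_left_comm _ (_ ^ d),
        ← Finset.mul_sum]
      simpa using hsum
  · rintro ⟨y, hy, hsum⟩
    refine ⟨algebraMap A K ∘ y, fun h0 => hy (funext fun i => hinj ?_), ?_⟩
    · simpa using congrFun h0 i
    · simpa using congrArg (algebraMap A K) hsum

end FractionRing

namespace IsDiscreteValuationRing

variable {A : Type*} [CommRing A] [IsDomain A] [IsDiscreteValuationRing A] {ϖ : A}
  {d : ℕ} {ι : Type*} [Fintype ι]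

lemma eq_zero_of_forall_pow_dvd (hϖ : Irreducible ϖ) {x : A} (h : ∀ n, ϖ ^ n ∣ x) : x = 0 := by
  by_contra hx
  obtain ⟨n, hn⟩ := FiniteMultiplicity.of_not_isUnit hϖ.not_isUnit hx
  exact hn (h _)

lemma dvd_of_sum_pow_mul_eq_zero (hϖ : Irreducible ϖ) {b : ι → A}
    (hb : ¬ IsotropicDiag (ResidueField A) d (residue A ∘ b)) {y : Fin d → ι → A}
    (h : ∑ j : Fin d, ϖ ^ (j : ℕ) * ∑ i, b i * y j i ^ d = 0) (j : Fin d) (i : ι) :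
    ϖ ∣ y j i := by
  induction j using WellFoundedLT.induction generalizing i with
  | _ j ih =>
  have hrow : ϖ ^ ((j : ℕ) + 1) ∣ ϖ ^ (j : ℕ) * ∑ i, b i * y j i ^ d := by
    rw [← Finset.add_sum_erase _ _ (Finset.mem_univ j), add_eq_zero_iff_eq_neg] at h
    rw [h, dvd_neg]
    refine Finset.dvd_sum fun j' hj' => ?_
    rcases (Finset.ne_of_mem_erase hj').lt_or_gt with hlt | hgt
    · have : ϖ ^ d ∣ ∑ i, b i * y j' i ^ d :=
        Finset.dvd_sum fun i _ => dvd_mul_of_dvd_right (pow_dvd_pow_of_dvd (ih j' hlt i) d) _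
      exact (pow_dvd_pow ϖ (by omega)).trans (pow_add ϖ j' d ▸ mul_dvd_mul_left _ this)
    · exact dvd_mul_of_dvd_left (pow_dvd_pow ϖ hgt) _
  rw [pow_succ, mul_dvd_mul_iff_left (pow_ne_zero _ hϖ.ne_zero)] at hrow
  have := mem_maximalIdeal_of_sum_mem hb (by rwa [hϖ.maximalIdeal_eq, Ideal.mem_span_singleton]) i
  rwa [hϖ.maximalIdeal_eq, Ideal.mem_span_singleton] at this

lemma eq_zero_of_sum_pow_mul_eq_zero (hϖ : Irreducible ϖ) {b : ι → A}
    (hb : ¬ IsotropicDiag (ResidueField A) d (residue A ∘ b)) {y : Fin d → ι → A}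
    (h : ∑ j : Fin d, ϖ ^ (j : ℕ) * ∑ i, b i * y j i ^ d = 0) : y = 0 := by
  suffices ∀ n (y : Fin d → ι → A), ∑ j : Fin d, ϖ ^ (j : ℕ) * ∑ i, b i * y j i ^ d = 0 →
      ∀ j i, ϖ ^ n ∣ y j i from
    funext fun j => funext fun i => eq_zero_of_forall_pow_dvd hϖ fun n => this n y h j i
  intro n
  induction n with
  | zero => simp
  | succ n ih =>
    intro y h j i
    choose z hz using dvd_of_sum_pow_mul_eq_zero hϖ hb h
    have hz0 : ∑ j : Fin d, ϖ ^ (j : ℕ) * ∑ i, b i * z j i ^ d = 0 := by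
      have hyz : ∑ j : Fin d, ϖ ^ (j : ℕ) * ∑ i, b i * y j i ^ d
          = ϖ ^ d * ∑ j : Fin d, ϖ ^ (j : ℕ) * ∑ i, b i * z j i ^ d := by
        simp only [hz, mul_pow, Finset.mul_sum]
        exact Finset.sum_congr rfl fun _ _ => Finset.sum_congr rfl fun _ _ => by ring
      rw [hyz] at h
      exact (mul_eq_zero.mp h).resolve_left (pow_ne_zero _ hϖ.ne_zero)
    rw [hz, pow_succ']
    exact mul_dvd_mul_left ϖ (ih z hz0 j i)

variable {K : Type*} [Field K] [Algebra A K] [IsFractionRing A K]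

lemma exists_mul_pow_eq_algebraMap_unit_mul_pow (hd : d ≠ 0) (hϖ : Irreducible ϖ) {a : K}
    (ha : a ≠ 0) :
    ∃ c : K, c ≠ 0 ∧ ∃ (u : Aˣ) (j : Fin d), a * c ^ d = algebraMap A K (u * ϖ ^ (j : ℕ)) := by
  obtain ⟨n, u, rfl⟩ := exists_units_eq_smul_zpow_of_irreducible hϖ ha
  have hπ : algebraMap A K ϖ ≠ 0 := by simpa using hϖ.ne_zero
  have hd' : (0 : ℤ) < d := by omega
  have hlt := Int.emod_lt_of_pos n hd'
  have hnonneg := Int.emod_nonneg n hd'.ne'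
  refine ⟨algebraMap A K ϖ ^ (-(n / d)), zpow_ne_zero _ hπ, u, ⟨(n % d).toNat, by omega⟩, ?_⟩
  have hexp : (((n % d).toNat : ℕ) : ℤ) = n + -(n / d) * d := by
    rw [Int.toNat_of_nonneg hnonneg, Int.emod_def]; ring
  rw [map_mul, map_pow, ← zpow_natCast _ (n % d).toNat, hexp, zpow_add₀ hπ, zpow_mul,
    zpow_natCast, Units.smul_def, Algebra.smul_def, mul_assoc]

variable (K)

lemma mul_mem_anisotropicDims (hd : d ≠ 0) {m : ℕ}
    (hm : m ∈ anisotropicDims d (ResidueField A)) : d * m ∈ anisotropicDims d K := by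
  obtain ⟨β, hβ, hani⟩ := hm
  choose b hb using fun i => residue_surjective (β i)
  obtain rfl : residue A ∘ b = β := funext hb
  obtain ⟨ϖ, hϖ⟩ := exists_irreducible A
  let c : Fin d × Fin m → A := fun p => ϖ ^ (p.1 : ℕ) * b p.2
  refine ⟨algebraMap A K ∘ c ∘ finProdFinEquiv.symm, fun k => ?_, fun hiso => ?_⟩
  · have hb0 : b (finProdFinEquiv.symm k).2 ≠ 0 := fun h =>
      hβ _ (by rw [Function.comp_apply, h, map_zero])
    simpa [c, hϖ.ne_zero, IsFractionRing.injective A K] using hb0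
  obtain ⟨y, hy, hsum⟩ := isotropicDiag_algebraMap_iff.mp
    (IsotropicDiag.of_comp (a := algebraMap A K ∘ c) hd finProdFinEquiv.symm.injective hiso)
  have hrows : ∑ j : Fin d, ϖ ^ (j : ℕ) * ∑ i, b i * y (j, i) ^ d = 0 := by
    simpa [c, Fintype.sum_prod_type, Finset.mul_sum, mul_assoc] using hsum
  have := eq_zero_of_sum_pow_mul_eq_zero hϖ hani hrows
  exact hy (funext fun p => congrFun (congrFun this p.1) p.2)

lemma le_mul_of_mem_anisotropicDims [HenselianRing A (IsLocalRing.maximalIdeal A)]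
    (hd : (d : ResidueField A) ≠ 0) {m : ℕ}
    (hm : ∀ n ∈ anisotropicDims d (ResidueField A), n ≤ m) {n : ℕ}
    (hn : n ∈ anisotropicDims d K) : n ≤ d * m := by
  have hd0 : d ≠ 0 := by rintro rfl; exact hd Nat.cast_zero
  obtain ⟨a, ha, hani⟩ := hn
  by_contra! hlt
  apply hani
  obtain ⟨ϖ, hϖ⟩ := exists_irreducible A
  choose c hc u j hnorm using fun i => exists_mul_pow_eq_algebraMap_unit_mul_pow hd0 hϖ (ha i)
  refine IsotropicDiag.of_mul_pow hc ?_
  simp_rw [hnorm]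
  obtain ⟨j₀, hj₀⟩ := Fintype.exists_lt_card_fiber_of_mul_lt_card j (by simpa using hlt)
  refine IsotropicDiag.of_comp hd0 (Subtype.val_injective (p := fun i => j i = j₀)) ?_
  have hfiber : (fun i => algebraMap A K (u i * ϖ ^ (j i : ℕ))) ∘ Subtype.val
      = fun i : {i // j i = j₀} => algebraMap A K (ϖ ^ (j₀ : ℕ)) * algebraMap A K (u i) :=
    funext fun i => by simp [i.2, mul_comm]
  rw [hfiber]
  refine IsotropicDiag.const_mul _ (isotropicDiag_algebraMap_iff.mpr ?_)
  refine exists_sum_eq_zero_of_isotropicDiag_residue hd (fun i => (u i).isUnit) ?_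
  exact IsotropicDiag.of_lt_card hd0 hm (fun i => by simp) (by rwa [Fintype.card_subtype])

end IsDiscreteValuationRing

/-- **Let `K` be a `p`-adic field** (formalized as the fraction field of a complete discrete
valuation ring `A` with finite residue field `𝔽_q`) **where `p = char 𝔽_q` does not divide
`d!`.  Then `u_diag(d,K) = d · u_diag(d,𝔽_q)`; in particular `u_diag(d,K) ≤ d²`.** -/
theorem uDiag_padic (A : Type*) [CommRing A] [IsDomain A] [IsDiscreteValuationRing A]
    [IsAdicComplete (IsLocalRing.maximalIdeal A) A]
    [Fintype (IsLocalRing.ResidueField A)]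
    (d : ℕ) (hd : 1 ≤ d) (hchar : (d.factorial : IsLocalRing.ResidueField A) ≠ 0) :
    uDiag d (FractionRing A) = (d : ℕ∞) * uDiag d (IsLocalRing.ResidueField A) ∧
      uDiag d (FractionRing A) ≤ (d : ℕ∞) ^ 2 := by
  have hd0 : d ≠ 0 := by omega
  have hdchar : (d : ResidueField A) ≠ 0 := fun h =>
    hchar (zero_dvd_iff.mp (h ▸ Nat.cast_dvd_cast (Nat.dvd_factorial hd le_rfl)))
  have hbound : ∀ n ∈ anisotropicDims d (ResidueField A), n ≤ d := fun n ⟨a, _, hani⟩ =>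
    not_lt.mp fun h => hani (FiniteField.isotropicDiag_of_lt_card hd0 (by simpa using h) a)
  obtain ⟨m, hm⟩ := BddAbove.exists_isGreatest_of_nonempty ⟨d, hbound⟩
    ⟨0, zero_mem_anisotropicDims⟩
  have hK : IsGreatest (anisotropicDims d (FractionRing A)) (d * m) :=
    ⟨IsDiscreteValuationRing.mul_mem_anisotropicDims _ hd0 hm.1,
      fun _ => IsDiscreteValuationRing.le_mul_of_mem_anisotropicDims _ hdchar hm.2⟩
  rw [uDiag_eq_of_isGreatest hK, uDiag_eq_of_isGreatest hm, Nat.cast_mul]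
  exact ⟨rfl, by rw [sq]; gcongr; exact_mod_cast hbound m hm.1⟩
end
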